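/- arXiv:quant-ph/0402076 — 3 statements merged into one kernel-verified Lean document; each statement's English description precedes it below -/
import Mathlib

section
/- Let q ≥ 1 and let A be a complex matrix on ℋ^{⊗q} whose symmetric part 𝖯_q(A) is Hermitian. Then the sequence μ_n(A) := λ_max(𝖯_{q+n}(A ⊗ I^{⊗n})) is non-increasing in n, i.e., λ_max(𝖯_{q+n+1}(A ⊗ I^{⊗(n+1)})) ≤ λ_max(𝖯_{q+n}(A ⊗ I^{⊗n})) for every n ≥ 0. -/
open Matrix Filter
open scoped ComplexOrder

/-- The permutation matrix `P_π` on `ℋ^{⊗n}` (`ℋ = ℂ^d`), acting by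
`(P_π x)_{(i₁,…,iₙ)} = x_{(i_{π(1)},…,i_{π(n)})}`. -/
noncomputable def permMatrix (d n : ℕ) (π : Equiv.Perm (Fin n)) :
    Matrix (Fin n → Fin d) (Fin n → Fin d) ℂ :=
  fun i j => if j = i ∘ π then 1 else 0

/-- The symmetrization `𝖯_n(X) = (1/n!) Σ_{π ∈ S_n} P_π† X P_π`. -/
noncomputable def symmetrize (d n : ℕ)
    (X : Matrix (Fin n → Fin d) (Fin n → Fin d) ℂ) :
    Matrix (Fin n → Fin d) (Fin n → Fin d) ℂ :=
  (n.factorial : ℂ)⁻¹ • ∑ π : Equiv.Perm (Fin n),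
    (permMatrix d n π)ᴴ * X * permMatrix d n π

/-- The largest (real) eigenvalue of a matrix: `λ_max`. -/
noncomputable def lamMax {I : Type*} [Fintype I] [DecidableEq I]
    (X : Matrix I I ℂ) : ℝ :=
  sSup {t : ℝ | ∃ v : I → ℂ, v ≠ 0 ∧ X *ᵥ v = (t : ℂ) • v}

/-- The `q`-fold Kronecker power `ρ^{⊗q}`. -/
noncomputable def tensPow (d q : ℕ) (ρ : Matrix (Fin d) (Fin d) ℂ) :
    Matrix (Fin q → Fin d) (Fin q → Fin d) ℂ :=
  fun i j => ∏ a, ρ (i a) (j a)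

/-- The matrix `A ⊗ I^{⊗n}` on `ℋ^{⊗(q+n)}`. -/
noncomputable def tensExt (d q n : ℕ)
    (A : Matrix (Fin q → Fin d) (Fin q → Fin d) ℂ) :
    Matrix (Fin (q + n) → Fin d) (Fin (q + n) → Fin d) ℂ :=
  fun i j =>
    A (fun a => i (Fin.castAdd n a)) (fun a => j (Fin.castAdd n a)) *
      ∏ b : Fin n, (if i (Fin.natAdd q b) = j (Fin.natAdd q b) then (1 : ℂ) else 0)

/-- A density matrix: positive semidefinite with unit trace. -/
def IsDensity (d : ℕ) (ρ : Matrix (Fin d) (Fin d) ℂ) : Prop :=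
  ρ.PosSemidef ∧ ρ.trace = 1


/-! If `c • 1 - 𝖯_m(X)` is positive semidefinite, then so is `(c • 1 - 𝖯_m(X)) ⊗ I` and hence its
symmetrization. Conjugating `X` by a permutation of the first `m` factors is absorbed by the
average over `S_{m+1}`, so `𝖯_{m+1}(𝖯_m(X) ⊗ I) = 𝖯_{m+1}(X ⊗ I)` and that symmetrization is
`c • 1 - 𝖯_{m+1}(X ⊗ I)`. For Hermitian `M`, `λ_max(M) ≤ c` iff `c • 1 - M ⪰ 0`; taking
`X = A ⊗ I^{⊗n}` and `c = μ_n(A)` gives `μ_{n+1}(A) ≤ μ_n(A)`. -/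

section Symmetrize
variable {d n : ℕ}

lemma permMatrix_conjTranspose_mul_mul (π : Equiv.Perm (Fin n))
    (X : Matrix (Fin n → Fin d) (Fin n → Fin d) ℂ) :
    (permMatrix d n π)ᴴ * X * permMatrix d n π = X.submatrix (· ∘ ⇑π⁻¹) (· ∘ ⇑π⁻¹) := by
  have hcomp : ∀ i j : Fin n → Fin d, j = i ∘ ⇑π ↔ i = j ∘ ⇑π⁻¹ := fun i j => by
    constructor <;> rintro rfl <;> funext a <;> simp
  ext i j
  simp [Matrix.mul_apply, permMatrix, hcomp]

lemma symmetrize_eq_sum_submatrix (X : Matrix (Fin n → Fin d) (Fin n → Fin d) ℂ) :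
    symmetrize d n X = (n.factorial : ℂ)⁻¹ • ∑ π : Equiv.Perm (Fin n),
      X.submatrix (· ∘ ⇑π) (· ∘ ⇑π) := by
  rw [symmetrize, ← Equiv.sum_comp (Equiv.inv _)]
  simp only [permMatrix_conjTranspose_mul_mul, Equiv.inv_apply, inv_inv]

lemma inv_factorial_smul_sum_perm_const {K M : Type*} [DivisionRing K] [CharZero K]
    [AddCommGroup M] [Module K M] (x : M) :
    (n.factorial : K)⁻¹ • ∑ _π : Equiv.Perm (Fin n), x = x := by
  rw [Finset.sum_const, Finset.card_univ, Fintype.card_perm, Fintype.card_fin,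
    ← Nat.cast_smul_eq_nsmul K, smul_smul,
    inv_mul_cancel₀ (by exact_mod_cast n.factorial_ne_zero), one_smul]

lemma symmetrize_sub (X Y : Matrix (Fin n → Fin d) (Fin n → Fin d) ℂ) :
    symmetrize d n (X - Y) = symmetrize d n X - symmetrize d n Y := by
  simp only [symmetrize_eq_sum_submatrix, submatrix_sub, Pi.sub_apply, Finset.sum_sub_distrib,
    smul_sub]

lemma symmetrize_smul (c : ℂ) (X : Matrix (Fin n → Fin d) (Fin n → Fin d) ℂ) :
    symmetrize d n (c • X) = c • symmetrize d n X := by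
  simp only [symmetrize_eq_sum_submatrix, submatrix_smul, Pi.smul_apply, ← Finset.smul_sum,
    smul_comm c]

lemma symmetrize_sum {ι : Type*} (s : Finset ι)
    (X : ι → Matrix (Fin n → Fin d) (Fin n → Fin d) ℂ) :
    symmetrize d n (∑ i ∈ s, X i) = ∑ i ∈ s, symmetrize d n (X i) := by
  have hsub : ∀ r : (Fin n → Fin d) → Fin n → Fin d,
      (∑ i ∈ s, X i).submatrix r r = ∑ i ∈ s, (X i).submatrix r r := fun r => by
    ext; simp [Matrix.sum_apply]
  simp only [symmetrize_eq_sum_submatrix, hsub, Finset.smul_sum]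
  rw [Finset.sum_comm]

lemma symmetrize_one : symmetrize d n 1 = 1 := by
  rw [symmetrize_eq_sum_submatrix,
    Finset.sum_congr rfl fun π _ => submatrix_one _ π.surjective.injective_comp_right]
  exact inv_factorial_smul_sum_perm_const 1

lemma symmetrize_conjTranspose (X : Matrix (Fin n → Fin d) (Fin n → Fin d) ℂ) :
    symmetrize d n Xᴴ = (symmetrize d n X)ᴴ := by
  simp [symmetrize_eq_sum_submatrix, conjTranspose_sum, conjTranspose_submatrix]

lemma symmetrize_submatrix_comp_perm (σ : Equiv.Perm (Fin n))
    (X : Matrix (Fin n → Fin d) (Fin n → Fin d) ℂ) :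
    symmetrize d n (X.submatrix (· ∘ ⇑σ) (· ∘ ⇑σ)) = symmetrize d n X := by
  conv_rhs => rw [symmetrize_eq_sum_submatrix, ← Equiv.sum_comp (Equiv.mulRight σ)]
  simp only [symmetrize_eq_sum_submatrix, submatrix_submatrix]
  rfl

lemma Matrix.PosSemidef.symmetrize {X : Matrix (Fin n → Fin d) (Fin n → Fin d) ℂ}
    (hX : X.PosSemidef) : (symmetrize d n X).PosSemidef := by
  rw [symmetrize_eq_sum_submatrix]
  exact .smul (Finset.sum_induction _ _ (fun _ _ => .add) .zero fun π _ => hX.submatrix _)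
    (by positivity)

end Symmetrize

section TensExt
open scoped Kronecker
variable {d q n : ℕ}

lemma tensExt_eq_submatrix_kronecker (A : Matrix (Fin q → Fin d) (Fin q → Fin d) ℂ) :
    tensExt d q n A = (A ⊗ₖ (1 : Matrix (Fin n → Fin d) (Fin n → Fin d) ℂ)).submatrix
      (Fin.appendEquiv q n).symm (Fin.appendEquiv q n).symm := by
  ext i j
  simp [tensExt, one_apply, Finset.prod_boole, funext_iff]

lemma tensExt_sub (X Y : Matrix (Fin q → Fin d) (Fin q → Fin d) ℂ) :
    tensExt d q n (X - Y) = tensExt d q n X - tensExt d q n Y := by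
  ext i j
  simp [tensExt, sub_mul]

lemma tensExt_smul (c : ℂ) (X : Matrix (Fin q → Fin d) (Fin q → Fin d) ℂ) :
    tensExt d q n (c • X) = c • tensExt d q n X := by
  ext i j
  simp [tensExt, mul_assoc]

lemma tensExt_sum {ι : Type*} (s : Finset ι)
    (X : ι → Matrix (Fin q → Fin d) (Fin q → Fin d) ℂ) :
    tensExt d q n (∑ i ∈ s, X i) = ∑ i ∈ s, tensExt d q n (X i) := by
  ext i j
  simp [tensExt, Matrix.sum_apply, Finset.sum_mul]

lemma tensExt_one : tensExt d q n (1 : Matrix (Fin q → Fin d) (Fin q → Fin d) ℂ) = 1 := by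
  rw [tensExt_eq_submatrix_kronecker, one_kronecker_one, submatrix_one_equiv]

lemma tensExt_conjTranspose (X : Matrix (Fin q → Fin d) (Fin q → Fin d) ℂ) :
    tensExt d q n Xᴴ = (tensExt d q n X)ᴴ := by
  simp only [tensExt_eq_submatrix_kronecker, conjTranspose_submatrix, conjTranspose_kronecker,
    conjTranspose_one]

lemma Matrix.PosSemidef.tensExt {X : Matrix (Fin q → Fin d) (Fin q → Fin d) ℂ} (hX : X.PosSemidef) :
    (tensExt d q n X).PosSemidef := by
  rw [tensExt_eq_submatrix_kronecker]
  exact (hX.kronecker .one).submatrix _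

lemma tensExt_submatrix_comp_perm (σ : Equiv.Perm (Fin q))
    (X : Matrix (Fin q → Fin d) (Fin q → Fin d) ℂ) :
    tensExt d q n (X.submatrix (· ∘ ⇑σ) (· ∘ ⇑σ)) =
      (tensExt d q n X).submatrix (· ∘ ⇑(finSumFinEquiv.permCongr (σ.sumCongr 1)))
        (· ∘ ⇑(finSumFinEquiv.permCongr (σ.sumCongr 1))) := by
  ext i j
  simp [tensExt, Equiv.permCongr_apply, Function.comp_def]

lemma tensExt_one_tensExt (A : Matrix (Fin q → Fin d) (Fin q → Fin d) ℂ) :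
    tensExt d (q + n) 1 (tensExt d q n A) = tensExt d q (n + 1) A := by
  ext i j
  simp only [tensExt]
  rw [Fin.prod_univ_one, Fin.prod_univ_castSucc, ← mul_assoc]
  rfl

end TensExt

section Symmetrization
variable {d q : ℕ}

lemma symmetrize_tensExt_symmetrize (n : ℕ) (X : Matrix (Fin q → Fin d) (Fin q → Fin d) ℂ) :
    symmetrize d (q + n) (tensExt d q n (symmetrize d q X)) =
      symmetrize d (q + n) (tensExt d q n X) := by
  rw [symmetrize_eq_sum_submatrix X, tensExt_smul, tensExt_sum, symmetrize_smul, symmetrize_sum]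
  simp only [tensExt_submatrix_comp_perm, symmetrize_submatrix_comp_perm]
  exact inv_factorial_smul_sum_perm_const _

lemma isHermitian_symmetrize_tensExt {A : Matrix (Fin q → Fin d) (Fin q → Fin d) ℂ}
    (hA : (symmetrize d q A).IsHermitian) (n : ℕ) :
    (symmetrize d (q + n) (tensExt d q n A)).IsHermitian := by
  rw [IsHermitian, ← symmetrize_conjTranspose, ← tensExt_conjTranspose,
    ← symmetrize_tensExt_symmetrize n Aᴴ, symmetrize_conjTranspose, hA,
    symmetrize_tensExt_symmetrize]

lemma posSemidef_smul_one_sub_symmetrize_tensExt {X : Matrix (Fin q → Fin d) (Fin q → Fin d) ℂ}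
    {c : ℝ} (h : ((c : ℂ) • 1 - symmetrize d q X).PosSemidef) (n : ℕ) :
    ((c : ℂ) • 1 - symmetrize d (q + n) (tensExt d q n X)).PosSemidef := by
  have h' := (h.tensExt (n := n)).symmetrize
  rwa [tensExt_sub, tensExt_smul, tensExt_one, symmetrize_sub, symmetrize_smul, symmetrize_one,
    symmetrize_tensExt_symmetrize] at h'

end Symmetrization

section LamMax
variable {I : Type*} [Fintype I] [DecidableEq I]

lemma lamMax_eq_sSup_spectrum (M : Matrix I I ℂ) : lamMax M = sSup (spectrum ℝ M) := by
  rw [lamMax]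
  congr 1
  ext t
  rw [Set.mem_ofPred_eq, ← spectrum.algebraMap_mem_iff ℂ, Complex.coe_algebraMap,
    ← Matrix.spectrum_toLin', ← Module.End.hasEigenvalue_iff_mem_spectrum,
    Module.End.hasEigenvalue_iff, Submodule.ne_bot_iff]
  simp only [Module.End.mem_eigenspace_iff, Matrix.toLin'_apply]
  exact ⟨fun ⟨v, hv, h⟩ => ⟨v, h, hv⟩, fun ⟨v, h, hv⟩ => ⟨v, hv, h⟩⟩

open scoped MatrixOrder in
lemma lamMax_le_iff [Nonempty I] {M : Matrix I I ℂ} (hM : M.IsHermitian) (c : ℝ) :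
    lamMax M ≤ c ↔ ((c : ℂ) • 1 - M).PosSemidef := by
  have hne : (spectrum ℝ M).Nonempty := by
    rw [hM.spectrum_real_eq_range_eigenvalues]
    exact Set.range_nonempty _
  rw [lamMax_eq_sSup_spectrum, csSup_le_iff M.finite_real_spectrum.bddAbove hne,
    ← le_algebraMap_iff_spectrum_le hM.isSelfAdjoint, Matrix.le_iff,
    Algebra.algebraMap_eq_smul_one, ← Complex.coe_smul]

end LamMax

theorem stmt1_general (d q : ℕ) (hd : 1 ≤ d)
    (A : Matrix (Fin q → Fin d) (Fin q → Fin d) ℂ)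
    (hA : (symmetrize d q A).IsHermitian) :
    ∀ n : ℕ,
      lamMax (symmetrize d (q + (n + 1)) (tensExt d q (n + 1) A)) ≤
        lamMax (symmetrize d (q + n) (tensExt d q n A)) := by
  intro n
  have : Nonempty (Fin d) := Fin.pos_iff_nonempty.mp hd
  have hμ := (lamMax_le_iff (isHermitian_symmetrize_tensExt hA n) _).mp le_rfl
  rw [lamMax_le_iff (isHermitian_symmetrize_tensExt hA (n + 1)), ← tensExt_one_tensExt]
  exact posSemidef_smul_one_sub_symmetrize_tensExt hμ 1

/-- For `q ≥ 1` and `A` on `ℋ^{⊗q}` with Hermitian symmetric part,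
the sequence `μ_n(A) = λ_max(𝖯_{q+n}(A ⊗ I^{⊗n}))` is non-increasing in `n`. -/
theorem stmt1 (d q : ℕ) (hd : 1 ≤ d) (hq : 1 ≤ q)
    (A : Matrix (Fin q → Fin d) (Fin q → Fin d) ℂ)
    (hA : (symmetrize d q A).IsHermitian) :
    ∀ n : ℕ,
      lamMax (symmetrize d (q + (n + 1)) (tensExt d q (n + 1) A)) ≤
        lamMax (symmetrize d (q + n) (tensExt d q n A)) :=
  stmt1_general d q hd A hA
end

section
/- Let q ≥ 1, n ≥ 0, and let A be any complex matrix on ℋ^{⊗q}. Let P_m be the d^m × S(d,m) isometry with entries (P_m)_{(i),[k]} = δ_{#(i),[k]} (C^m_{[k]})^{−1/2}, indexed by tuples (i) ∈ {1,…,d}^m and types [k] ∈ ℕ^d with Σ[k] = m, and set Q_n(A) := P_{q+n}† (A ⊗ I^{⊗n}) P_{q+n}. Then for all types [k],[l] with Σ[k] = Σ[l] = q+n: (C^{q+n}_{[k]} C^{q+n}_{[l]})^{1/2} · Q_n(A)_{[k],[l]} = Σ over [u],[v] ∈ ℕ^d with Σ[u] = Σ[v] = q of C^n_{[k]−[u]}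 · δ_{[k]−[u],[l]−[v]} · (C^q_{[u]} C^q_{[v]})^{1/2} · (P_q† A P_q)_{[u],[v]}. -/
open Matrix Filter
open scoped ComplexOrder

/-- The type `#(i) ∈ ℕ^d` of a tuple `(i) ∈ {1,…,d}^m`. -/
def typeCount {d m : ℕ} (i : Fin m → Fin d) : Fin d → ℕ :=
  fun j => (Finset.univ.filter (fun a => i a = j)).card

/-- The multinomial coefficient `C^n_{[k]}` for `[k] ∈ ℤ^d`, `0` when some `k_j < 0`. -/
noncomputable def multinomZ (d : ℕ) (k : Fin d → ℤ) : ℕ :=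
  if ∀ j, 0 ≤ k j then Nat.multinomial Finset.univ (fun j => (k j).toNat) else 0

/-- The set of types `[k] ∈ ℕ^d` with `Σ[k] = m`; it has `S(d,m)` elements. -/
abbrev TypeIdx (d m : ℕ) := {k : Fin d → ℕ // ∑ j, k j = m}

noncomputable instance instFintypeTypeIdx (d m : ℕ) : Fintype (TypeIdx d m) :=
  Fintype.ofInjective
    (fun k => (fun j => (⟨k.1 j, Nat.lt_succ_of_le
        (le_trans (Finset.single_le_sum (fun i _ => Nat.zero_le (k.1 i)) (Finset.mem_univ j))
          (le_of_eq k.2))⟩ : Fin (m + 1))))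
    (fun a b h => Subtype.ext (funext fun j => congrArg Fin.val (congrFun h j)))

/-- The `d^m × S(d,m)` isometry `P_m`, `(P_m)_{(i),[k]} = δ_{#(i),[k]} (C^m_{[k]})^{−1/2}`,
whose columns span the totally symmetric subspace. -/
noncomputable def isoP (d m : ℕ) : Matrix (Fin m → Fin d) (TypeIdx d m) ℂ :=
  fun i k => if typeCount i = k.1
    then ((Real.sqrt (Nat.multinomial Finset.univ k.1) : ℝ) : ℂ)⁻¹ else 0

/-- `Q_n(A) = P_{q+n}† (A ⊗ I^{⊗n}) P_{q+n}`. -/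
noncomputable def Qmat (d q n : ℕ) (A : Matrix (Fin q → Fin d) (Fin q → Fin d) ℂ) :
    Matrix (TypeIdx d (q + n)) (TypeIdx d (q + n)) ℂ :=
  (isoP d (q + n))ᴴ * tensExt d q n A * isoP d (q + n)

/-!
Write `(A ⊗ I^{⊗n})_{(a,s),(b,t)} = A_{ab} δ_{st}` with `a, b ∈ {1,…,d}^q`, `s, t ∈ {1,…,d}^n`.
After scaling by `√(C_{[k]} C_{[l]})`, the entry `Q_n(A)_{[k],[l]}` is the sum of `(A ⊗ I^{⊗n})_{ij}`
over tuples `i` of type `[k]` and `j` of type `[l]`, that is `Σ_{a,b} N(a,b) A_{ab}` with `N(a,b)`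
the number of words `s` such that `#a + #s = [k]` and `#b + #s = [l]`. These exist only if
`[k] − #a = [l] − #b`, and are then the words of type `[k] − #a`; by the multinomial theorem there
are `C^n_{[k]−#a}` of them. Grouping `a` and `b` by their types `[u]`, `[v]` reassembles
`Σ_{#a=[u], #b=[v]} A_{ab} = √(C^q_{[u]} C^q_{[v]}) (P_q† A P_q)_{[u],[v]}`.
-/

open Finset

lemma sum_typeCount {d m : ℕ} (i : Fin m → Fin d) : ∑ j, typeCount i j = m := by
  simpa [typeCount] using (card_eq_sum_card_fiberwise (s := univ) (f := i) (t := univ)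
    fun a _ => mem_univ _).symm

def typeOf {d m : ℕ} (i : Fin m → Fin d) : TypeIdx d m := ⟨typeCount i, sum_typeCount i⟩

lemma typeOf_eq_iff {d m : ℕ} {i : Fin m → Fin d} {k : TypeIdx d m} :
    typeOf i = k ↔ typeCount i = k.1 :=
  Subtype.ext_iff

open MvPolynomial in
lemma prod_X_eq_monomial_typeCount {d n : ℕ} (t : Fin n → Fin d) :
    ∏ a, (X (t a) : MvPolynomial (Fin d) ℕ) =
      monomial (Finsupp.equivFunOnFinite.symm (typeCount t)) 1 := by
  have : ∑ a, Finsupp.single (t a) 1 = Finsupp.equivFunOnFinite.symm (typeCount t) := by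
    ext j
    simp only [Finsupp.finsetSum_apply, Finsupp.single_apply,
      Finsupp.equivFunOnFinite_symm_apply_apply, typeCount, card_filter]
  simp_rw [X, ← monomial_sum_one, this]

open MvPolynomial in
theorem card_filter_typeCount_eq {d n : ℕ} (w : Fin d → ℕ) (hw : ∑ j, w j = n) :
    #{t : Fin n → Fin d | typeCount t = w} = Nat.multinomial univ w := by
  have key := coeff_sum_X_pow_of_fintype (R := ℕ) (Finsupp.equivFunOnFinite.symm w) n
  rw [← Fin.prod_const, prod_univ_sum] at key
  simpa [prod_X_eq_monomial_typeCount, coeff_sum, coeff_monomial, Finsupp.sum_fintype, hw,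
    ← Finsupp.multinomial_of_support_subset (subset_univ _)] using key

theorem card_filter_typeCount_cast_eq {d n : ℕ} (w : Fin d → ℤ) (hw : ∑ j, w j = n) :
    #{t : Fin n → Fin d | (fun j => (typeCount t j : ℤ)) = w} = multinomZ d w := by
  unfold multinomZ
  split_ifs with hpos
  · rw [← card_filter_typeCount_eq (fun j => (w j).toNat)]
    · congr 1
      refine filter_congr fun t _ => ?_
      simp only [funext_iff]
      exact forall_congr' fun j => by have := hpos j; omega
    · zify
      rw [← hw]
      exact sum_congr rfl fun j _ => Int.toNat_of_nonneg (hpos j)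
  · push Not at hpos
    obtain ⟨j, hj⟩ := hpos
    rw [card_eq_zero, filter_eq_empty_iff]
    intro t _ ht
    have : (typeCount t j : ℤ) = w j := congrFun ht j
    omega

theorem card_filter_add_typeCount_eq {d n : ℕ} (u v k l : Fin d → ℕ)
    (hk : ∑ j, k j = ∑ j, u j + n) :
    #{s : Fin n → Fin d | (fun j => u j + typeCount s j) = k ∧
        (fun j => v j + typeCount s j) = l} =
      multinomZ d (fun j => (k j : ℤ) - u j) *
        if (fun j => (k j : ℤ) - u j) = (fun j => (l j : ℤ) - v j) then 1 else 0 := by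
  split_ifs with hkl
  · rw [mul_one, ← card_filter_typeCount_cast_eq]
    · congr 1
      refine filter_congr fun s _ => ?_
      simp only [funext_iff] at hkl ⊢
      constructor
      · rintro ⟨h, -⟩ j
        have := h j
        omega
      · intro h
        exact ⟨fun j => by have := h j; omega, fun j => by have := h j; have := hkl j; omega⟩
    · have hk' : ∑ j, (k j : ℤ) = ∑ j, (u j : ℤ) + n := by exact_mod_cast hk
      rw [sum_sub_distrib, hk']
      ring
  · rw [mul_zero, card_eq_zero, filter_eq_empty_iff]
    rintro s - ⟨hu, hv⟩
    apply hkl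
    funext j
    have := congrFun hu j
    have := congrFun hv j
    omega

lemma sqrt_multinomial_ne_zero {d : ℕ} (w : Fin d → ℕ) :
    ((√(Nat.multinomial univ w) : ℝ) : ℂ) ≠ 0 := by
  have := Nat.multinomial_pos univ w
  positivity

theorem sqrt_multinomial_mul_conjTranspose_isoP_mul_isoP_apply {d m : ℕ}
    (X : Matrix (Fin m → Fin d) (Fin m → Fin d) ℂ) (k l : TypeIdx d m) :
    ((√(Nat.multinomial univ k.1) * √(Nat.multinomial univ l.1) : ℝ) : ℂ) *
        ((isoP d m)ᴴ * X * isoP d m) k l =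
      ∑ i with typeOf i = k, ∑ j with typeOf j = l, X i j := by
  have hk := sqrt_multinomial_ne_zero k.1
  have hl := sqrt_multinomial_ne_zero l.1
  simp only [mul_apply, conjTranspose_apply, isoP, sum_mul, mul_sum, sum_filter, typeOf_eq_iff]
  rw [sum_comm]
  refine sum_congr rfl fun i _ => ?_
  split_ifs with hi
  · refine sum_congr rfl fun j _ => ?_
    split_ifs with hj
    · simp only [Complex.ofReal_mul, star_inv₀, RCLike.star_def, Complex.conj_ofReal]
      field_simp
    · simp
  · simp

theorem sum_sum_mul_sqrt_multinomial_mul_conjTranspose_isoP_mul_isoP_apply {d m : ℕ}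
    (f : TypeIdx d m → TypeIdx d m → ℂ) (X : Matrix (Fin m → Fin d) (Fin m → Fin d) ℂ) :
    ∑ u, ∑ v, f u v * ((√(Nat.multinomial univ u.1) * √(Nat.multinomial univ v.1) : ℝ) : ℂ) *
        ((isoP d m)ᴴ * X * isoP d m) u v =
      ∑ a, ∑ b, f (typeOf a) (typeOf b) * X a b := by
  have hfib : ∀ u v, f u v * ∑ a with typeOf a = u, ∑ b with typeOf b = v, X a b =
      ∑ a with typeOf a = u, ∑ b with typeOf b = v, f (typeOf a) (typeOf b) * X a b := by
    intro u v
    simp_rw [mul_sum]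
    refine sum_congr rfl fun a ha => sum_congr rfl fun b hb => ?_
    rw [(mem_filter.1 ha).2, (mem_filter.1 hb).2]
  simp_rw [mul_assoc, sqrt_multinomial_mul_conjTranspose_isoP_mul_isoP_apply, hfib]
  rw [← sum_fiberwise univ typeOf]
  refine sum_congr rfl fun u _ => ?_
  rw [sum_comm]
  exact sum_congr rfl fun a _ => sum_fiberwise univ typeOf _

lemma typeCount_append {d q n : ℕ} (a : Fin q → Fin d) (s : Fin n → Fin d) :
    typeCount (Fin.append a s) = fun j => typeCount a j + typeCount s j := by
  funext j
  simp only [typeCount, card_filter, Fin.sum_univ_add, Fin.append_left, Fin.append_right]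

lemma tensExt_append {d q n : ℕ} (A : Matrix (Fin q → Fin d) (Fin q → Fin d) ℂ)
    (a b : Fin q → Fin d) (s t : Fin n → Fin d) :
    tensExt d q n A (Fin.append a s) (Fin.append b t) = if s = t then A a b else 0 := by
  simp [tensExt, Fintype.prod_boole, funext_iff]

theorem sum_filter_typeOf_tensExt {d q n : ℕ} (A : Matrix (Fin q → Fin d) (Fin q → Fin d) ℂ)
    (k l : TypeIdx d (q + n)) :
    ∑ i with typeOf i = k, ∑ j with typeOf j = l, tensExt d q n A i j =
      ∑ a, ∑ b, (#{s : Fin n → Fin d | (fun j => typeCount a j + typeCount s j) = k.1 ∧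
        (fun j => typeCount b j + typeCount s j) = l.1} : ℂ) * A a b := by
  have happend : ∀ p, Fin.appendEquiv (α := Fin d) q n p = Fin.append p.1 p.2 := fun _ => rfl
  have hdiag : ∀ a s b, ∑ t, (if typeOf (Fin.append b t) = l then
      tensExt d q n A (Fin.append a s) (Fin.append b t) else 0) =
        if typeOf (Fin.append b s) = l then A a b else 0 := by
    intro a s b
    rw [Fintype.sum_eq_single s fun t hts => by simp [tensExt_append, Ne.symm hts]]
    simp [tensExt_append]
  simp only [sum_filter, ← (Fin.appendEquiv q n).sum_comp, Fintype.sum_prod_type, happend, hdiag]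
  simp only [ite_sum_zero, typeOf_eq_iff, typeCount_append, card_filter, Nat.cast_sum, Nat.cast_ite,
    Nat.cast_one, Nat.cast_zero, sum_mul, ite_and, ite_mul, one_mul, zero_mul]
  exact sum_congr rfl fun a _ => sum_comm

theorem stmt12_general (d q n : ℕ)
    (A : Matrix (Fin q → Fin d) (Fin q → Fin d) ℂ)
    (k l : TypeIdx d (q + n)) :
    ((Real.sqrt (Nat.multinomial Finset.univ k.1) *
        Real.sqrt (Nat.multinomial Finset.univ l.1) : ℝ) : ℂ) * Qmat d q n A k l =
      ∑ u : TypeIdx d q, ∑ v : TypeIdx d q,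
        (multinomZ d (fun j => (k.1 j : ℤ) - (u.1 j : ℤ)) : ℂ) *
          (if (fun j => (k.1 j : ℤ) - (u.1 j : ℤ)) =
              (fun j => (l.1 j : ℤ) - (v.1 j : ℤ)) then 1 else 0) *
          ((Real.sqrt (Nat.multinomial Finset.univ u.1) *
              Real.sqrt (Nat.multinomial Finset.univ v.1) : ℝ) : ℂ) *
          ((isoP d q)ᴴ * A * isoP d q) u v := by
  rw [Qmat, sqrt_multinomial_mul_conjTranspose_isoP_mul_isoP_apply, sum_filter_typeOf_tensExt,
    sum_sum_mul_sqrt_multinomial_mul_conjTranspose_isoP_mul_isoP_apply]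
  refine sum_congr rfl fun a _ => sum_congr rfl fun b _ => ?_
  have hk : ∑ j, k.1 j = ∑ j, typeCount a j + n := by rw [k.2, sum_typeCount]
  rw [card_filter_add_typeCount_eq _ _ _ _ hk]
  push_cast
  rfl

/-- For any complex matrix `A` on `ℋ^{⊗q}` and all types `[k],[l]` with
`Σ[k] = Σ[l] = q+n`:
`√(C^{q+n}_{[k]} C^{q+n}_{[l]}) · Q_n(A)_{[k],[l]}
  = Σ_{[u],[v], Σ[u]=Σ[v]=q} C^n_{[k]−[u]} δ_{[k]−[u],[l]−[v]} √(C^q_{[u]} C^q_{[v]})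
      (P_q† A P_q)_{[u],[v]}`. -/
theorem stmt12 (d q n : ℕ) (hd : 1 ≤ d) (hq : 1 ≤ q)
    (A : Matrix (Fin q → Fin d) (Fin q → Fin d) ℂ)
    (k l : TypeIdx d (q + n)) :
    ((Real.sqrt (Nat.multinomial Finset.univ k.1) *
        Real.sqrt (Nat.multinomial Finset.univ l.1) : ℝ) : ℂ) * Qmat d q n A k l =
      ∑ u : TypeIdx d q, ∑ v : TypeIdx d q,
        (multinomZ d (fun j => (k.1 j : ℤ) - (u.1 j : ℤ)) : ℂ) *
          (if (fun j => (k.1 j : ℤ) - (u.1 j : ℤ)) =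
              (fun j => (l.1 j : ℤ) - (v.1 j : ℤ)) then 1 else 0) *
          ((Real.sqrt (Nat.multinomial Finset.univ u.1) *
              Real.sqrt (Nat.multinomial Finset.univ v.1) : ℝ) : ℂ) *
          ((isoP d q)ᴴ * A * isoP d q) u v :=
  stmt12_general d q n A k l
end

section
/- Let q ≥ 1, n ≥ 0, and let A be a symmetric matrix on ℋ^{⊗q} (P_τ† A P_τ = A for all τ ∈ S_q). If π, σ ∈ S_{q+n} satisfy π^{-1}({1,…,q}) = σ^{-1}({1,…,q}) as subsets of {1,…,q+n}, then P_π† (A ⊗ I^{⊗n}) P_π = P_σ† (A ⊗ I^{⊗n}) P_σ. Consequently, the symmetrization 𝖯_{q+n}(A ⊗ I^{⊗n}) equals the average of only binom(q+n, q) distinct conjugates, one for each q-element subset of {1,…,q+n}. -/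
open Matrix Filter
open scoped ComplexOrder

/-!
If `π` and `σ` pull back `{1,…,q}` to the same set, then `ρ = π σ⁻¹` preserves `{1,…,q}`,
so it is a block permutation `α ⊕ β`; conjugating `A ⊗ I^{⊗n}` by it gives `(P_α† A P_α) ⊗ I^{⊗n} = A ⊗ I^{⊗n}`.
For the average, `(S, α, β) ↦ (α ⊕ β) · f S` is a bijection from `q`-subsets × `S_q` × `S_n`
onto `S_{q+n}`, so each of the `binom(q+n, q)` conjugates occurs exactly `q! n!` times.
-/

open Equiv

noncomputable def permConj (d m : ℕ) (π : Perm (Fin m))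
    (X : Matrix (Fin m → Fin d) (Fin m → Fin d) ℂ) :
    Matrix (Fin m → Fin d) (Fin m → Fin d) ℂ :=
  (permMatrix d m π)ᴴ * X * permMatrix d m π

section PermConj

variable {d m : ℕ}

lemma permMatrix_apply_eq_ite (π : Perm (Fin m)) (i j : Fin m → Fin d) :
    permMatrix d m π i j = if i = j ∘ ⇑π⁻¹ then 1 else 0 := by
  have : j = i ∘ ⇑π ↔ i = j ∘ ⇑π⁻¹ :=
    ⟨fun h => by ext a; simp [h], fun h => by ext a; simp [h]⟩
  simp only [permMatrix, this]

lemma permConj_apply (π : Perm (Fin m)) (X : Matrix (Fin m → Fin d) (Fin m → Fin d) ℂ)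
    (i j : Fin m → Fin d) :
    permConj d m π X i j = X (i ∘ ⇑π⁻¹) (j ∘ ⇑π⁻¹) := by
  simp [permConj, Matrix.mul_apply, permMatrix_apply_eq_ite, apply_ite (star : ℂ → ℂ)]

lemma permConj_permConj (ρ σ : Perm (Fin m)) (X : Matrix (Fin m → Fin d) (Fin m → Fin d) ℂ) :
    permConj d m σ (permConj d m ρ X) = permConj d m (ρ * σ) X := by
  ext i j
  simp only [permConj_apply, _root_.mul_inv_rev, Perm.coe_mul]
  rfl

end PermConj

section BlockPerm

variable {q n : ℕ}

def blockPerm (q n : ℕ) : Perm (Fin q) × Perm (Fin n) →* Perm (Fin (q + n)) :=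
  (finSumFinEquiv.permCongrHom : Perm (Fin q ⊕ Fin n) ≃* Perm (Fin (q + n))).toMonoidHom.comp
    (Perm.sumCongrHom (Fin q) (Fin n))

@[simp]
lemma blockPerm_apply_castAdd (g : Perm (Fin q) × Perm (Fin n)) (a : Fin q) :
    blockPerm q n g (Fin.castAdd n a) = Fin.castAdd n (g.1 a) := by
  simp [blockPerm, Equiv.permCongrHom_coe, Equiv.permCongr_apply]

@[simp]
lemma blockPerm_apply_natAdd (g : Perm (Fin q) × Perm (Fin n)) (b : Fin n) :
    blockPerm q n g (Fin.natAdd q b) = Fin.natAdd q (g.2 b) := by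
  simp [blockPerm, Equiv.permCongrHom_coe, Equiv.permCongr_apply]

lemma blockPerm_injective : Function.Injective (blockPerm q n) :=
  fun _ _ h => Perm.sumCongrHom_injective (finSumFinEquiv.permCongrHom.injective h)

lemma preimage_blockPerm_range_castAdd (g : Perm (Fin q) × Perm (Fin n)) :
    ⇑(blockPerm q n g) ⁻¹' Set.range (Fin.castAdd n) = Set.range (Fin.castAdd n) := by
  ext x
  induction x using Fin.addCases with
  | left a => simp
  | right b => simp [Fin.ext_iff]; omega

lemma mem_range_blockPerm_of_mapsTo {ρ : Perm (Fin (q + n))}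
    (hρ : Set.MapsTo ρ (Set.range (Fin.castAdd n)) (Set.range (Fin.castAdd n))) :
    ρ ∈ (blockPerm q n).range := by
  have hmaps : Set.MapsTo (finSumFinEquiv.symm.permCongr ρ) (Set.range Sum.inl)
      (Set.range Sum.inl) := by
    rintro _ ⟨a, rfl⟩
    obtain ⟨a', ha'⟩ := hρ ⟨a, rfl⟩
    exact ⟨a', by simp [Equiv.permCongr_apply, ← ha']⟩
  obtain ⟨g, hg⟩ := Perm.mem_sumCongrHom_range_of_perm_mapsTo_inl hmaps
  refine ⟨g, ?_⟩
  simp only [blockPerm, MonoidHom.comp_apply, hg]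
  ext x
  simp [Equiv.permCongrHom_coe, Equiv.permCongr_apply]

end BlockPerm

section TensExt

variable {d q n : ℕ}

lemma permConj_blockPerm_tensExt (A : Matrix (Fin q → Fin d) (Fin q → Fin d) ℂ)
    (g : Perm (Fin q) × Perm (Fin n)) :
    permConj d (q + n) (blockPerm q n g) (tensExt d q n A) =
      tensExt d q n (permConj d q g.1 A) := by
  ext i j
  simp only [permConj_apply, tensExt, ← map_inv, Function.comp_def, blockPerm_apply_castAdd,
    blockPerm_apply_natAdd, Prod.fst_inv, Prod.snd_inv]
  congr 1
  exact Equiv.prod_comp g.2⁻¹ (fun b => if i (Fin.natAdd q b) = j (Fin.natAdd q b) then 1 else 0)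

lemma permConj_tensExt_of_mapsTo {A : Matrix (Fin q → Fin d) (Fin q → Fin d) ℂ}
    (hA : ∀ τ, permConj d q τ A = A) {ρ : Perm (Fin (q + n))}
    (hρ : Set.MapsTo ρ (Set.range (Fin.castAdd n)) (Set.range (Fin.castAdd n))) :
    permConj d (q + n) ρ (tensExt d q n A) = tensExt d q n A := by
  obtain ⟨g, rfl⟩ := mem_range_blockPerm_of_mapsTo hρ
  rw [permConj_blockPerm_tensExt, hA]

lemma permConj_tensExt_eq_of_preimage_eq {A : Matrix (Fin q → Fin d) (Fin q → Fin d) ℂ}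
    (hA : ∀ τ, permConj d q τ A = A) {π σ : Perm (Fin (q + n))}
    (h : ⇑π ⁻¹' Set.range (Fin.castAdd n) = ⇑σ ⁻¹' Set.range (Fin.castAdd n)) :
    permConj d (q + n) π (tensExt d q n A) = permConj d (q + n) σ (tensExt d q n A) := by
  have hρ : Set.MapsTo (π * σ⁻¹) (Set.range (Fin.castAdd n)) (Set.range (Fin.castAdd n)) := by
    intro x hx
    have : σ⁻¹ x ∈ ⇑σ ⁻¹' Set.range (Fin.castAdd n) := by simpa using hx
    rw [← h] at this
    exact this
  calc permConj d (q + n) π (tensExt d q n A)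
      = permConj d (q + n) (π * σ⁻¹ * σ) (tensExt d q n A) := by rw [inv_mul_cancel_right]
    _ = permConj d (q + n) σ (permConj d (q + n) (π * σ⁻¹) (tensExt d q n A)) :=
        (permConj_permConj _ _ _).symm
    _ = permConj d (q + n) σ (tensExt d q n A) := by rw [permConj_tensExt_of_mapsTo hA hρ]

end TensExt

lemma choose_mul_factorial_mul_factorial_add (q n : ℕ) :
    (q + n).choose q * (q.factorial * n.factorial) = (q + n).factorial := by
  rw [← mul_assoc]
  simpa using Nat.choose_mul_factorial_mul_factorial (Nat.le_add_right q n)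

section Symmetrize

variable {d q n : ℕ}

lemma bijective_blockPerm_mul {f : {S : Finset (Fin (q + n)) // S.card = q} → Perm (Fin (q + n))}
    (hf : ∀ S, ⇑(f S) ⁻¹' Set.range (Fin.castAdd n) = ↑S.1) :
    Function.Bijective fun p : {S : Finset (Fin (q + n)) // S.card = q} ×
        (Perm (Fin q) × Perm (Fin n)) => blockPerm q n p.2 * f p.1 := by
  refine (Fintype.bijective_iff_injective_and_card _).mpr ⟨?_, ?_⟩
  · rintro ⟨S, g⟩ ⟨S', g'⟩ (h : blockPerm q n g * f S = blockPerm q n g' * f S')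
    have hpre : ∀ (S : {S : Finset (Fin (q + n)) // S.card = q}) (g : Perm (Fin q) × Perm (Fin n)),
        ⇑(blockPerm q n g * f S) ⁻¹' Set.range (Fin.castAdd n) = ↑S.1 := fun S g => by
      rw [Perm.coe_mul, Set.preimage_comp, preimage_blockPerm_range_castAdd, hf]
    obtain rfl : S = S' := Subtype.ext <| Finset.coe_injective <| by
      rw [← hpre S g, ← hpre S' g', h]
    rw [blockPerm_injective (mul_right_cancel h)]
  · simp only [Fintype.card_prod, Fintype.card_finset_len, Fintype.card_perm, Fintype.card_fin]
    exact choose_mul_factorial_mul_factorial_add q n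

lemma sum_permConj_tensExt {A : Matrix (Fin q → Fin d) (Fin q → Fin d) ℂ}
    (hA : ∀ τ, permConj d q τ A = A)
    {f : {S : Finset (Fin (q + n)) // S.card = q} → Perm (Fin (q + n))}
    (hf : ∀ S, ⇑(f S) ⁻¹' Set.range (Fin.castAdd n) = ↑S.1) :
    ∑ π, permConj d (q + n) π (tensExt d q n A) =
      (q.factorial * n.factorial) • ∑ S, permConj d (q + n) (f S) (tensExt d q n A) := by
  rw [← (bijective_blockPerm_mul hf).sum_comp, Fintype.sum_prod_type, Finset.smul_sum]
  refine Finset.sum_congr rfl fun S _ => ?_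
  simp only [← permConj_permConj, permConj_blockPerm_tensExt, hA, Finset.sum_const,
    Finset.card_univ, Fintype.card_prod, Fintype.card_perm, Fintype.card_fin]

lemma symmetrize_tensExt {A : Matrix (Fin q → Fin d) (Fin q → Fin d) ℂ}
    (hA : ∀ τ, permConj d q τ A = A)
    {f : {S : Finset (Fin (q + n)) // S.card = q} → Perm (Fin (q + n))}
    (hf : ∀ S, ⇑(f S) ⁻¹' Set.range (Fin.castAdd n) = ↑S.1) :
    symmetrize d (q + n) (tensExt d q n A) =
      ((q + n).choose q : ℂ)⁻¹ • ∑ S, permConj d (q + n) (f S) (tensExt d q n A) := by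
  change ((q + n).factorial : ℂ)⁻¹ • ∑ π, permConj d (q + n) π (tensExt d q n A) = _
  rw [sum_permConj_tensExt hA hf, ← Nat.cast_smul_eq_nsmul ℂ, smul_smul,
    ← choose_mul_factorial_mul_factorial_add q n, Nat.cast_mul, mul_inv, mul_assoc,
    inv_mul_cancel₀ (by positivity), mul_one]

end Symmetrize

theorem stmt13_general (d q n : ℕ)
    (A : Matrix (Fin q → Fin d) (Fin q → Fin d) ℂ)
    (hsym : ∀ τ : Equiv.Perm (Fin q), (permMatrix d q τ)ᴴ * A * permMatrix d q τ = A) :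
    (∀ π σ : Equiv.Perm (Fin (q + n)),
      ⇑π ⁻¹' Set.range (Fin.castAdd n : Fin q → Fin (q + n)) =
        ⇑σ ⁻¹' Set.range (Fin.castAdd n : Fin q → Fin (q + n)) →
      (permMatrix d (q + n) π)ᴴ * tensExt d q n A * permMatrix d (q + n) π =
        (permMatrix d (q + n) σ)ᴴ * tensExt d q n A * permMatrix d (q + n) σ) ∧
    (∀ f : {S : Finset (Fin (q + n)) // S.card = q} → Equiv.Perm (Fin (q + n)),
      (∀ S, ⇑(f S) ⁻¹' Set.range (Fin.castAdd n : Fin q → Fin (q + n)) = ↑S.1) →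
      symmetrize d (q + n) (tensExt d q n A) =
        (((q + n).choose q : ℂ))⁻¹ •
          ∑ S : {S : Finset (Fin (q + n)) // S.card = q},
            (permMatrix d (q + n) (f S))ᴴ * tensExt d q n A * permMatrix d (q + n) (f S)) :=
  ⟨fun _ _ h => permConj_tensExt_eq_of_preimage_eq hsym h, fun _ hf => symmetrize_tensExt hsym hf⟩

/-- For symmetric `A` on `ℋ^{⊗q}`: if `π, σ ∈ S_{q+n}` have the same
preimage of `{1,…,q}`, then they give the same conjugate of `A ⊗ I^{⊗n}`; consequently
`𝖯_{q+n}(A ⊗ I^{⊗n})` is the average of only `binom(q+n,q)` distinct conjugates, one for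
each `q`-element subset of `{1,…,q+n}`. -/
theorem stmt13 (d q n : ℕ) (hd : 1 ≤ d) (hq : 1 ≤ q)
    (A : Matrix (Fin q → Fin d) (Fin q → Fin d) ℂ)
    (hsym : ∀ τ : Equiv.Perm (Fin q), (permMatrix d q τ)ᴴ * A * permMatrix d q τ = A) :
    (∀ π σ : Equiv.Perm (Fin (q + n)),
      ⇑π ⁻¹' Set.range (Fin.castAdd n : Fin q → Fin (q + n)) =
        ⇑σ ⁻¹' Set.range (Fin.castAdd n : Fin q → Fin (q + n)) →
      (permMatrix d (q + n) π)ᴴ * tensExt d q n A * permMatrix d (q + n) π =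
        (permMatrix d (q + n) σ)ᴴ * tensExt d q n A * permMatrix d (q + n) σ) ∧
    (∀ f : {S : Finset (Fin (q + n)) // S.card = q} → Equiv.Perm (Fin (q + n)),
      (∀ S, ⇑(f S) ⁻¹' Set.range (Fin.castAdd n : Fin q → Fin (q + n)) = ↑S.1) →
      symmetrize d (q + n) (tensExt d q n A) =
        (((q + n).choose q : ℂ))⁻¹ •
          ∑ S : {S : Finset (Fin (q + n)) // S.card = q},
            (permMatrix d (q + n) (f S))ᴴ * tensExt d q n A * permMatrix d (q + n) (f S)) :=
  stmt13_general d q n A hsym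
end
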